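/- Let V be a complex inner product space and T : V → V a symmetric linear map. Then for every integer j ≥ 1 and every u ∈ V one has ‖T^j u‖² ≤ ‖u‖² + ‖T^{j+1} u‖². -/

import Mathlib

/-- Let `V` be a complex inner product space and `T : V → V` a symmetric
linear map. Then for every integer `j ≥ 1` and every `u ∈ V` one has
`‖T^j u‖² ≤ ‖u‖² + ‖T^{j+1} u‖²`. -/
theorem norm_pow_sq_le_norm_sq_add_norm_pow_succ_sq
    {V : Type*} [NormedAddCommGroup V] [InnerProductSpace ℂ V]
    (T : V →ₗ[ℂ] V)
    (hsym : ∀ u v : V, (inner ℂ (T u) v : ℂ) = inner ℂ u (T v))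
    (j : ℕ) (hj : 1 ≤ j) (u : V) :
    ‖(T ^ j) u‖ ^ 2 ≤ ‖u‖ ^ 2 + ‖(T ^ (j + 1)) u‖ ^ 2 := by
  -- key Cauchy–Schwarz step
  have key : ∀ k : ℕ, ‖(T ^ (k + 1)) u‖ ^ 2 ≤ ‖(T ^ k) u‖ * ‖(T ^ (k + 2)) u‖ := by
    intro k
    have h1 : (T ^ (k + 1)) u = T ((T ^ k) u) := by
      rw [pow_succ']; rfl
    have h2 : (T ^ (k + 2)) u = T ((T ^ (k + 1)) u) := by
      rw [show k + 2 = (k + 1) + 1 from rfl, pow_succ']; rfl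
    have hinner : (inner ℂ ((T ^ (k + 1)) u) ((T ^ (k + 1)) u) : ℂ)
        = inner ℂ ((T ^ k) u) ((T ^ (k + 2)) u) := by
      rw [h2]
      nth_rewrite 1 [h1]
      exact hsym _ _
    calc ‖(T ^ (k + 1)) u‖ ^ 2
        = ‖(inner ℂ ((T ^ (k + 1)) u) ((T ^ (k + 1)) u) : ℂ)‖ := by
          rw [inner_self_eq_norm_sq_to_K]; simp [sq_abs]
      _ = ‖(inner ℂ ((T ^ k) u) ((T ^ (k + 2)) u) : ℂ)‖ := by rw [hinner]
      _ ≤ ‖(T ^ k) u‖ * ‖(T ^ (k + 2)) u‖ := norm_inner_le_norm _ _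
  induction j, hj using Nat.le_induction with
  | base =>
    have := key 0
    simp only [pow_zero, Module.End.one_apply] at this
    nlinarith [key 0, norm_nonneg ((T ^ 1) u), norm_nonneg u, norm_nonneg ((T ^ 2) u),
      sq_nonneg (‖u‖ - ‖(T ^ 2) u‖)]
  | succ n hn ih =>
    have hk := key n
    nlinarith [key n, ih, norm_nonneg ((T ^ n) u), norm_nonneg ((T ^ (n + 1)) u),
      norm_nonneg ((T ^ (n + 2)) u), sq_nonneg (‖(T ^ n) u‖ - ‖(T ^ (n + 2)) u‖)]
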